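/- For every positive integer n, S_7(n) = (6n^2−8n+3)·n^2·C(2n,n). -/

import Mathlib

/-!
The summand vanishes at `k = n` and is symmetric under `k ↦ 2n - k`, so the sum is twice
`∑_{k < n} C(2n,k) (n-k)^7`. Gosper's algorithm finds a polynomial `Q(n,k)` with `Q(n,0) = 0` for
which `C(2n,k) Q(n,k)` is an antidifference of `2 C(2n,k) (n-k)^7`; the partial sum is therefore
`C(2n,n) Q(n,n)`, and `Q(n,n) = (6n^2 - 8n + 3) n^2`.
-/

open Finset

theorem natCast_choose_succ_mul_succ (N j : ℕ) :
    (N.choose (j + 1) : ℤ) * (j + 1) = N.choose j * (N - j) := by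
  rcases le_or_gt j N with hj | hj
  · have := congrArg (Nat.cast : ℕ → ℤ) (Nat.choose_succ_right_eq N j)
    push_cast [Nat.cast_sub hj] at this
    exact this
  · simp [Nat.choose_eq_zero_of_lt hj, Nat.choose_eq_zero_of_lt (Nat.lt_succ_of_lt hj)]

/-- `hQ` says that `C(N,j) Q(j)` is an antidifference of `C(N,j) g(j)`, after clearing the ratio
`C(N,j+1) / C(N,j) = (N-j)/(j+1)`. -/
theorem sum_range_choose_mul_eq_of_certificate (N : ℕ) (g Q : ℤ → ℤ)
    (hQ : ∀ j : ℕ, (N - j) * Q (j + 1) - (j + 1) * Q j = (j + 1) * g j) (hQ₀ : Q 0 = 0)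
    (m : ℕ) : ∑ j ∈ range m, (N.choose j : ℤ) * g j = N.choose m * Q m := by
  induction m with
  | zero => simp [hQ₀]
  | succ m ih =>
    have hm : ((m : ℤ) + 1) ≠ 0 := by positivity
    apply mul_left_cancel₀ hm
    rw [sum_range_succ, ih]
    push_cast
    linear_combination (-Q (m + 1)) * natCast_choose_succ_mul_succ N m
      - (N.choose m : ℤ) * hQ m

theorem sum_range_choose_mul_abs_sub_pow (n r : ℕ) (hr : r ≠ 0) :
    ∑ k ∈ range (2 * n + 1), ((2 * n).choose k : ℤ) * |(n : ℤ) - k| ^ r =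
      2 * ∑ k ∈ range n, ((2 * n).choose k : ℤ) * ((n : ℤ) - k) ^ r := by
  set f : ℕ → ℤ := fun k => ((2 * n).choose k : ℤ) * |(n : ℤ) - k| ^ r with hf
  have h_upper : ∑ i ∈ range n, f (n + 1 + i) = ∑ k ∈ range n, f k := by
    rw [← sum_range_reflect f n]
    refine sum_congr rfl fun i hi => ?_
    have hi : i < n := mem_range.mp hi
    simp only [hf]
    rw [← Nat.choose_symm (by omega : n + 1 + i ≤ 2 * n),
      show 2 * n - (n + 1 + i) = n - 1 - i by omega, abs_sub_comm]
    congr 3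
    omega
  have h_lower : ∀ k ∈ range n, f k = ((2 * n).choose k : ℤ) * ((n : ℤ) - k) ^ r := by
    intro k hk
    simp only [hf]
    rw [abs_of_nonneg (by have := mem_range.mp hk; omega)]
  rw [show 2 * n + 1 = (n + 1) + n by ring, sum_range_add, sum_range_succ, h_upper,
    sum_congr rfl h_lower, sub_self, abs_zero, zero_pow hr, mul_zero, add_zero]
  exact (two_mul _).symm

def gosperCertificate (n j : ℤ) : ℤ :=
  (n^6 + 6*n^5 + 12*n^4 + 2*n^3 - 16*n^2 + 6*n) * j
  + (-6*n^5 - 27*n^4 - 30*n^3 + 19*n^2 + 8*n - 3) * j^2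
  + (15*n^4 + 48*n^3 + 24*n^2 - 20*n) * j^3
  + (-20*n^3 - 42*n^2 - 6*n + 5) * j^4
  + (15*n^2 + 18*n) * j^5
  + (-6*n - 3) * j^6
  + j^7

theorem gosperCertificate_spec (n j : ℤ) :
    (2 * n - j) * gosperCertificate n (j + 1) - (j + 1) * gosperCertificate n j =
      (j + 1) * (2 * (n - j) ^ 7) := by
  unfold gosperCertificate; ring

theorem gosperCertificate_self (n : ℤ) :
    gosperCertificate n n = (6 * n ^ 2 - 8 * n + 3) * n ^ 2 := by
  unfold gosperCertificate; ring

theorem stmt_8 (n : ℕ) :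
    ∑ k ∈ Finset.range (2 * n + 1), (Nat.choose (2 * n) k : ℤ) * |(n : ℤ) - k| ^ 7 =
      (6 * n ^ 2 - 8 * n + 3) * n ^ 2 * Nat.choose (2 * n) n := by
  calc _ = 2 * ∑ k ∈ range n, ((2 * n).choose k : ℤ) * ((n : ℤ) - k) ^ 7 :=
        sum_range_choose_mul_abs_sub_pow n 7 (by norm_num)
    _ = ∑ k ∈ range n, ((2 * n).choose k : ℤ) * (2 * ((n : ℤ) - k) ^ 7) := by
        rw [mul_sum]; exact sum_congr rfl fun k _ => by ring
    _ = (2 * n).choose n * gosperCertificate n n :=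
        sum_range_choose_mul_eq_of_certificate (2 * n) (fun j => 2 * ((n : ℤ) - j) ^ 7)
          (gosperCertificate n)
          (fun j => by push_cast; exact gosperCertificate_spec n j)
          (by simp [gosperCertificate]) n
    _ = _ := by rw [gosperCertificate_self]; ring
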